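/- Let F₁ and F₂ be subspaces of a finite-dimensional vector space E over a field. For every m ≥ 0, the m-th symmetric power of F₁ ∩ F₂, viewed as a subspace of Sym^m(E), equals the intersection of Sym^m(F₁) and Sym^m(F₂) inside Sym^m(E). -/

import Mathlib

/-!
Choose a projection `p` of `E` onto `F₁` whose kernel contains a complement of `F₁ ∩ F₂` in
`F₂`; then `p` is the identity on `F₁` and maps `F₂` into `F₁ ∩ F₂`. Its tensor power `p^{⊗m}`
therefore fixes `Sym^m(F₁)` pointwise and maps `Sym^m(F₂)` into `Sym^m(F₁ ∩ F₂)`, so it sends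
every element of `Sym^m(F₁) ∩ Sym^m(F₂)` to itself and into `Sym^m(F₁ ∩ F₂)`.
-/

/-- The `m`-th symmetric power of a subspace `F` of `E`, viewed (in characteristic zero,
via polarization) as the subspace of the `m`-th tensor power of `E` spanned by the tensors
`v ⊗ v ⊗ ... ⊗ v` for `v ∈ F`. -/
noncomputable def symPow (K : Type*) [Field K] {E : Type*} [AddCommGroup E] [Module K E]
    (m : ℕ) (F : Submodule K E) : Submodule K (PiTensorProduct K (fun _ : Fin m => E)) :=
  Submodule.span K {x | ∃ v ∈ F, x = PiTensorProduct.tprod K (fun _ : Fin m => v)}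

theorem Submodule.exists_linearMap_eqOn_id_map_le_inf {K E : Type*} [DivisionRing K]
    [AddCommGroup E] [Module K E] (F₁ F₂ : Submodule K E) :
    ∃ p : E →ₗ[K] E, Set.EqOn p id F₁ ∧ F₂.map p ≤ F₁ ⊓ F₂ := by
  obtain ⟨W, hdisj, hsup⟩ :=
    IsModularLattice.exists_disjoint_and_sup_eq (inf_le_right : F₁ ⊓ F₂ ≤ F₂)
  have hWF₂ : W ≤ F₂ := hsup ▸ le_sup_right
  have hF₁W : Disjoint F₁ W := disjoint_iff_inf_le.2 <|
    (le_inf (inf_le_inf_left F₁ hWF₂) inf_le_right).trans hdisj.le_bot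
  obtain ⟨C, hWC, hC⟩ := hF₁W.symm.exists_isCompl
  refine ⟨F₁.projection C hC.symm, fun x hx ↦ projection_apply_of_mem_left _ hx, ?_⟩
  conv_lhs => rw [← hsup]
  rw [Submodule.map_sup, sup_le_iff, Submodule.map_le_iff_le_comap, Submodule.map_le_iff_le_comap]
  refine ⟨fun x hx ↦ ?_, fun x hx ↦ ?_⟩
  · simpa [projection_apply_of_mem_left _ hx.1] using hx
  · simp [projection_apply_of_mem_right _ (hWC hx)]

section symPow

variable (K : Type*) [Field K] {E E' : Type*} [AddCommGroup E] [Module K E]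
  [AddCommGroup E'] [Module K E'] (m : ℕ)

theorem symPow_mono {F F' : Submodule K E} (h : F ≤ F') : symPow K m F ≤ symPow K m F' :=
  Submodule.span_mono <| by
    rintro x ⟨v, hv, rfl⟩
    exact ⟨v, h hv, rfl⟩

theorem map_symPow (f : E →ₗ[K] E') (F : Submodule K E) :
    (symPow K m F).map (PiTensorProduct.map fun _ ↦ f) = symPow K m (F.map f) := by
  rw [symPow, symPow, Submodule.map_span]
  congr 1
  ext x
  simp [PiTensorProduct.map_tprod, eq_comm]

theorem symPow_le_eqLocus {F : Submodule K E} {f g : E →ₗ[K] E'} (h : Set.EqOn f g F) :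
    symPow K m F ≤ LinearMap.eqLocus (PiTensorProduct.map fun _ ↦ f)
      (PiTensorProduct.map fun _ ↦ g) :=
  Submodule.span_le.2 <| by
    rintro _ ⟨v, hv, rfl⟩
    simp [PiTensorProduct.map_tprod, h hv]

end symPow

theorem stmt4_general {K E : Type*} [Field K] [AddCommGroup E] [Module K E]
    (F₁ F₂ : Submodule K E) (m : ℕ) :
    symPow K m (F₁ ⊓ F₂) = symPow K m F₁ ⊓ symPow K m F₂ := by
  refine le_antisymm (le_inf (symPow_mono K m inf_le_left) (symPow_mono K m inf_le_right)) ?_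
  obtain ⟨p, hp₁, hp₂⟩ := F₁.exists_linearMap_eqOn_id_map_le_inf F₂
  rintro x ⟨hx₁, hx₂⟩
  have hfix : PiTensorProduct.map (fun _ ↦ p) x = x := by
    simpa [PiTensorProduct.map_id] using symPow_le_eqLocus K m (g := LinearMap.id) hp₁ hx₁
  rw [← hfix]
  exact symPow_mono K m hp₂ (map_symPow K m p F₂ ▸ Submodule.mem_map_of_mem hx₂)

/-- Let `F₁` and `F₂` be subspaces of a finite-dimensional vector space `E`
over a field of characteristic zero. For every `m ≥ 0`, the `m`-th symmetric power of
`F₁ ⊓ F₂`, viewed as a subspace of `Sym^m(E)`, equals the intersection of `Sym^m(F₁)` and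
`Sym^m(F₂)` inside `Sym^m(E)`. -/
theorem stmt4 {K E : Type*} [Field K] [CharZero K] [AddCommGroup E] [Module K E]
    [FiniteDimensional K E] (F₁ F₂ : Submodule K E) (m : ℕ) :
    symPow K m (F₁ ⊓ F₂) = symPow K m F₁ ⊓ symPow K m F₂ :=
  stmt4_general F₁ F₂ m
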